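/- arXiv:0811.0427 — 3 statements merged into one kernel-verified Lean document; each statement's English description precedes it below -/
import Mathlib

section
/- Let F_X = (V_X, C_X) and F_Y = (V_Y, C_Y) be CNF formulas over disjoint sets of variables, let c_0 = z_1 ∨ z_2 ∨ ... ∨ z_k be a clause of C_X consisting of k distinct literals with k ≤ |C_Y|, and let h : C_Y → {z_1, ..., z_k} be any surjective map. Define the formula F_Z over the variables V_X ∪ V_Y with clause set C_Z = (C_X \ {c_0}) ∪ { c_y ∨ h(c_y) : c_y ∈ C_Y }. If F_X and F_Y are both unsatisfiable, then F_Z is unsatisfiable. -/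
/-- An assignment `a` satisfies a clause if the clause contains a literal `(v, b)` with `a v = b`. -/
def ClauseSat {V : Type} (a : V → Bool) (c : Finset (V × Bool)) : Prop :=
  ∃ p ∈ c, a p.1 = p.2

/-- An assignment satisfies a CNF formula if it satisfies every clause. -/
def FormulaSat {V : Type} (a : V → Bool) (F : Finset (Finset (V × Bool))) : Prop :=
  ∀ c ∈ F, ClauseSat a c

/-- A CNF formula is satisfiable if some assignment satisfies it. -/
def Satisfiable {V : Type} (F : Finset (Finset (V × Bool))) : Prop :=
  ∃ a : V → Bool, FormulaSat a F

/-- A CNF formula is minimal unsatisfiable if it is unsatisfiable but removing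
any single clause yields a satisfiable formula. -/
def MinimalUnsat {V : Type} [DecidableEq V] (F : Finset (Finset (V × Bool))) : Prop :=
  ¬ Satisfiable F ∧ ∀ c ∈ F, Satisfiable (F.erase c)

/-- A `k`-SAT formula: every clause has exactly `k` literals whose underlying
variables are pairwise distinct. -/
def IsKSat {V : Type} [DecidableEq V] (k : ℕ) (F : Finset (Finset (V × Bool))) : Prop :=
  ∀ c ∈ F, c.card = k ∧ (c.image Prod.fst).card = k

/-- Lift a clause along a renaming of variables. -/
def liftClause {A B : Type} [DecidableEq A] [DecidableEq B] (f : A → B)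
    (c : Finset (A × Bool)) : Finset (B × Bool) :=
  c.image fun p => (f p.1, p.2)

/-- The clause set `C_Z = (C_X \ {c_0}) ∪ { c_y ∨ h(c_y) : c_y ∈ C_Y }`, with the
variables of `F_X` and `F_Y` made disjoint via the sum type `VX ⊕ VY`. -/
def combinedFormula {VX VY : Type} [DecidableEq VX] [DecidableEq VY]
    (CX : Finset (Finset (VX × Bool))) (CY : Finset (Finset (VY × Bool)))
    (c₀ : Finset (VX × Bool)) (h : Finset (VY × Bool) → VX × Bool) :
    Finset (Finset ((VX ⊕ VY) × Bool)) :=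
  ((CX.erase c₀).image (liftClause Sum.inl)) ∪
    (CY.image fun c => insert (Sum.inl (h c).1, (h c).2) (liftClause Sum.inr c))


section Sat

variable {V : Type}

theorem clauseSat_insert [DecidableEq V] (a : V → Bool) (l : V × Bool) (c : Finset (V × Bool)) :
    ClauseSat a (insert l c) ↔ a l.1 = l.2 ∨ ClauseSat a c := by
  simp only [ClauseSat, Finset.exists_mem_insert]

theorem clauseSat_liftClause {W : Type} [DecidableEq V] [DecidableEq W] (f : V → W)
    (a : W → Bool) (c : Finset (V × Bool)) :
    ClauseSat a (liftClause f c) ↔ ClauseSat (a ∘ f) c := by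
  simp only [ClauseSat, liftClause, Finset.exists_mem_image, Function.comp_apply]

theorem FormulaSat.of_erase [DecidableEq V] {a : V → Bool} {F : Finset (Finset (V × Bool))}
    {c : Finset (V × Bool)} (hF : FormulaSat a (F.erase c)) (hc : ClauseSat a c) :
    FormulaSat a F := fun d hd =>
  if hdc : d = c then hdc ▸ hc else hF d (Finset.mem_erase.mpr ⟨hdc, hd⟩)

theorem exists_not_clauseSat_of_not_satisfiable {F : Finset (Finset (V × Bool))}
    (hF : ¬ Satisfiable F) (a : V → Bool) : ∃ c ∈ F, ¬ ClauseSat a c := by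
  by_contra! hall
  exact hF ⟨a, hall⟩

end Sat

theorem formulaSat_combinedFormula_iff {VX VY : Type} [DecidableEq VX] [DecidableEq VY]
    {CX : Finset (Finset (VX × Bool))} {CY : Finset (Finset (VY × Bool))}
    {c₀ : Finset (VX × Bool)} {h : Finset (VY × Bool) → VX × Bool} {a : VX ⊕ VY → Bool} :
    FormulaSat a (combinedFormula CX CY c₀ h) ↔
      FormulaSat (a ∘ Sum.inl) (CX.erase c₀) ∧
        ∀ c ∈ CY, (a ∘ Sum.inl) (h c).1 = (h c).2 ∨ ClauseSat (a ∘ Sum.inr) c := by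
  simp only [FormulaSat, combinedFormula, Finset.forall_mem_union, Finset.forall_mem_image,
    clauseSat_insert, clauseSat_liftClause, Function.comp_apply]

theorem combined_unsat_general {VX VY : Type} [DecidableEq VX] [DecidableEq VY]
    (CX : Finset (Finset (VX × Bool))) (CY : Finset (Finset (VY × Bool)))
    (c₀ : Finset (VX × Bool))
    (h : Finset (VY × Bool) → VX × Bool)
    (hmem : ∀ c ∈ CY, h c ∈ c₀)
    (hX : ¬ Satisfiable CX) (hY : ¬ Satisfiable CY) :
    ¬ Satisfiable (combinedFormula CX CY c₀ h) := by
  rintro ⟨a, ha⟩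
  obtain ⟨hXrest, hYh⟩ := formulaSat_combinedFormula_iff.mp ha
  obtain ⟨cy, hcy, hfail⟩ := exists_not_clauseSat_of_not_satisfiable hY (a ∘ Sum.inr)
  have hc₀ : ClauseSat (a ∘ Sum.inl) c₀ :=
    ⟨h cy, hmem cy hcy, (hYh cy hcy).resolve_right hfail⟩
  exact hX ⟨_, hXrest.of_erase hc₀⟩

theorem combined_unsat {VX VY : Type} [DecidableEq VX] [DecidableEq VY]
    (CX : Finset (Finset (VX × Bool))) (CY : Finset (Finset (VY × Bool)))
    (c₀ : Finset (VX × Bool)) (hc₀ : c₀ ∈ CX) (k : ℕ) (hk : c₀.card = k)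
    (hkY : k ≤ CY.card)
    (h : Finset (VY × Bool) → VX × Bool)
    (hmem : ∀ c ∈ CY, h c ∈ c₀)
    (hsurj : ∀ z ∈ c₀, ∃ c ∈ CY, h c = z)
    (hX : ¬ Satisfiable CX) (hY : ¬ Satisfiable CY) :
    ¬ Satisfiable (combinedFormula CX CY c₀ h) :=
  combined_unsat_general CX CY c₀ h hmem hX hY
end

section
/- Let F_X = (V_X, C_X) and F_Y = (V_Y, C_Y) be minimal unsatisfiable CNF formulas over disjoint sets of variables, let c_0 = z_1 ∨ z_2 ∨ ... ∨ z_k be a clause of C_X consisting of k distinct literals with k ≤ |C_Y|, and let h : C_Y → {z_1, ..., z_k} be any surjective map. Define the formula F_Z over the variables V_X ∪ V_Y with clause set C_Z = (C_X \ {c_0}) ∪ { c_y ∨ h(c_y) : c_y ∈ C_Y }. Then for every clause c_z ∈ C_X \ {c_0}, the formula obtained from F_Z by removing c_z is satisfiable. -/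
/-!
Remove `cz ≠ c₀` from `F_X`: a satisfying assignment `a_X` of the rest must satisfy `c₀`, say
through the literal `z`. Pick `c_y` with `h c_y = z` and an assignment `a_Y` satisfying `F_Y`
without `c_y`. Then `a_X ⊕ a_Y` satisfies every clause of `F_Z` other than `cz`: the old clauses
through `a_X`, the clause `c_y ∨ z` through `z`, the other new clauses through `a_Y`.
-/

theorem clauseSat_liftClause_iff {A B : Type} [DecidableEq A] [DecidableEq B] (f : A → B)
    (a : B → Bool) (c : Finset (A × Bool)) :
    ClauseSat a (liftClause f c) ↔ ClauseSat (a ∘ f) c := by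
  simp only [ClauseSat, liftClause, Finset.exists_mem_image, Function.comp_apply]

theorem clauseSat_insert_iff {V : Type} [DecidableEq V] (a : V → Bool) (p : V × Bool)
    (c : Finset (V × Bool)) :
    ClauseSat a (insert p c) ↔ a p.1 = p.2 ∨ ClauseSat a c := by
  simp [ClauseSat]

theorem FormulaSat.mono {V : Type} {a : V → Bool} {F G : Finset (Finset (V × Bool))}
    (hG : FormulaSat a G) (hFG : F ⊆ G) : FormulaSat a F :=
  fun c hc => hG c (hFG hc)

theorem formulaSat_union_iff {V : Type} [DecidableEq V] (a : V → Bool)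
    (F G : Finset (Finset (V × Bool))) :
    FormulaSat a (F ∪ G) ↔ FormulaSat a F ∧ FormulaSat a G :=
  Finset.forall_mem_union

theorem FormulaSat.image_liftClause {A B : Type} [DecidableEq A] [DecidableEq B] {f : A → B}
    {a : B → Bool} {F : Finset (Finset (A × Bool))} (hF : FormulaSat (a ∘ f) F) :
    FormulaSat a (F.image (liftClause f)) := by
  intro d hd
  obtain ⟨c, hc, rfl⟩ := Finset.mem_image.1 hd
  exact (clauseSat_liftClause_iff f a c).2 (hF c hc)

section Combined

variable {VX VY : Type} [DecidableEq VX] [DecidableEq VY]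
  {CX : Finset (Finset (VX × Bool))} {CY : Finset (Finset (VY × Bool))}
  {c₀ : Finset (VX × Bool)} {h : Finset (VY × Bool) → VX × Bool}

theorem erase_combinedFormula_subset (cz : Finset (VX × Bool)) :
    (combinedFormula CX CY c₀ h).erase (liftClause Sum.inl cz) ⊆
      (CX.erase cz).image (liftClause Sum.inl) ∪
        CY.image fun c => insert (Sum.inl (h c).1, (h c).2) (liftClause Sum.inr c) := by
  intro d hd
  obtain ⟨hd_ne, hd⟩ := Finset.mem_erase.1 hd
  rcases Finset.mem_union.1 hd with hd | hd
  · obtain ⟨c, hc, rfl⟩ := Finset.mem_image.1 hd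
    have hc_ne : c ≠ cz := by rintro rfl; exact hd_ne rfl
    exact Finset.mem_union_left _
      (Finset.mem_image_of_mem _ (Finset.mem_erase.2 ⟨hc_ne, (Finset.mem_erase.1 hc).2⟩))
  · exact Finset.mem_union_right _ hd

theorem formulaSat_erase_combinedFormula {cz : Finset (VX × Bool)} {cy : Finset (VY × Bool)}
    {aX : VX → Bool} {aY : VY → Bool} (haX : FormulaSat aX (CX.erase cz))
    (haY : FormulaSat aY (CY.erase cy)) (hcy : aX (h cy).1 = (h cy).2) :
    FormulaSat (Sum.elim aX aY) ((combinedFormula CX CY c₀ h).erase (liftClause Sum.inl cz)) := by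
  refine FormulaSat.mono ?_ (erase_combinedFormula_subset cz)
  refine (formulaSat_union_iff _ _ _).2 ⟨FormulaSat.image_liftClause haX, ?_⟩
  intro d hd
  obtain ⟨c, hc, rfl⟩ := Finset.mem_image.1 hd
  rw [clauseSat_insert_iff]
  by_cases hc_eq : c = cy
  · exact Or.inl (hc_eq ▸ hcy)
  · exact Or.inr ((clauseSat_liftClause_iff _ _ _).2 (haY c (Finset.mem_erase.2 ⟨hc_eq, hc⟩)))

end Combined

theorem combined_erase_old_sat_general {VX VY : Type} [DecidableEq VX] [DecidableEq VY]
    (CX : Finset (Finset (VX × Bool))) (CY : Finset (Finset (VY × Bool)))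
    (c₀ : Finset (VX × Bool)) (hc₀ : c₀ ∈ CX)
    (h : Finset (VY × Bool) → VX × Bool)
    (hsurj : ∀ z ∈ c₀, ∃ c ∈ CY, h c = z)
    (hX : MinimalUnsat CX) (hY : MinimalUnsat CY) :
    ∀ cz ∈ CX.erase c₀,
      Satisfiable ((combinedFormula CX CY c₀ h).erase (liftClause Sum.inl cz)) := by
  intro cz hcz
  obtain ⟨hcz_ne, hczX⟩ := Finset.mem_erase.1 hcz
  obtain ⟨aX, haX⟩ := hX.2 cz hczX
  obtain ⟨z, hz, haz⟩ := haX c₀ (Finset.mem_erase.2 ⟨Ne.symm hcz_ne, hc₀⟩)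
  obtain ⟨cy, hcy, rfl⟩ := hsurj z hz
  obtain ⟨aY, haY⟩ := hY.2 cy hcy
  exact ⟨Sum.elim aX aY, formulaSat_erase_combinedFormula haX haY haz⟩

theorem combined_erase_old_sat {VX VY : Type} [DecidableEq VX] [DecidableEq VY]
    (CX : Finset (Finset (VX × Bool))) (CY : Finset (Finset (VY × Bool)))
    (c₀ : Finset (VX × Bool)) (hc₀ : c₀ ∈ CX) (k : ℕ) (hk : c₀.card = k)
    (hkY : k ≤ CY.card)
    (h : Finset (VY × Bool) → VX × Bool)
    (hmem : ∀ c ∈ CY, h c ∈ c₀)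
    (hsurj : ∀ z ∈ c₀, ∃ c ∈ CY, h c = z)
    (hX : MinimalUnsat CX) (hY : MinimalUnsat CY) :
    ∀ cz ∈ CX.erase c₀,
      Satisfiable ((combinedFormula CX CY c₀ h).erase (liftClause Sum.inl cz)) :=
  combined_erase_old_sat_general CX CY c₀ hc₀ h hsurj hX hY
end

section
/- For every integer m ≥ 1, the CNF formula F_0 over the variables x_1, ..., x_{6m} whose clauses are all 3-clauses x_{i_1} ∨ x_{i_2} ∨ x_{i_3} with 1 ≤ i_1 ≤ 2m, 2m+1 ≤ i_2 ≤ 4m, 4m+1 ≤ i_3 ≤ 6m, together with the three clauses ¬x_1 ∨ ... ∨ ¬x_{2m}, ¬x_{2m+1} ∨ ... ∨ ¬x_{4m}, and ¬x_{4m+1} ∨ ... ∨ ¬x_{6m}, is minimal unsatisfiable: F_0 is unsatisfiable, and for every clause c of F_0 the formula obtained from F_0 by removing c is satisfiable. -/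
/-- The formula `F₀` over variables `x_0, …, x_{6m-1}`: all positive 3-clauses
`x_{i₁} ∨ x_{i₂} ∨ x_{i₃}` with `i₁ < 2m`, `2m ≤ i₂ < 4m`, `4m ≤ i₃ < 6m`,
together with the three negative clauses `¬x_0 ∨ … ∨ ¬x_{2m-1}`,
`¬x_{2m} ∨ … ∨ ¬x_{4m-1}` and `¬x_{4m} ∨ … ∨ ¬x_{6m-1}`. -/
def F₀ (m : ℕ) : Finset (Finset (ℕ × Bool)) :=
  ((Finset.range (2 * m) ×ˢ Finset.range (2 * m) ×ˢ Finset.range (2 * m)).image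
    fun p => ({(p.1, true), (2 * m + p.2.1, true), (4 * m + p.2.2, true)} :
      Finset (ℕ × Bool))) ∪
  ({(Finset.range (2 * m)).image fun i => (i, false),
    (Finset.range (2 * m)).image fun i => (2 * m + i, false),
    (Finset.range (2 * m)).image fun i => (4 * m + i, false)} :
      Finset (Finset (ℕ × Bool)))

/-!
Each negative clause forces a false variable in its block, and the positive clause through these
three variables is then falsified. Conversely, the assignment that is false exactly on the three
variables of a positive clause satisfies every other clause, and the indicator of a block
satisfies every clause except the negative clause of that block.
-/

/-- The variables of `F₀ m` form three blocks of `2 * m` consecutive variables. -/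
def blockVar (m k i : ℕ) : ℕ := 2 * k * m + i

def posClause (m i₀ i₁ i₂ : ℕ) : Finset (ℕ × Bool) :=
  {(blockVar m 0 i₀, true), (blockVar m 1 i₁, true), (blockVar m 2 i₂, true)}

def negClause (m k : ℕ) : Finset (ℕ × Bool) :=
  (Finset.range (2 * m)).image fun i => (blockVar m k i, false)

lemma blockVar_div {m k i : ℕ} (hi : i < 2 * m) : blockVar m k i / (2 * m) = k := by
  rw [blockVar, mul_right_comm, Nat.mul_add_div (by omega), Nat.div_eq_of_lt hi, add_zero]

lemma clauseSat_posClause (a : ℕ → Bool) (m i₀ i₁ i₂ : ℕ) :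
    ClauseSat a (posClause m i₀ i₁ i₂) ↔
      a (blockVar m 0 i₀) ∨ a (blockVar m 1 i₁) ∨ a (blockVar m 2 i₂) := by
  simp [ClauseSat, posClause]

lemma clauseSat_negClause (a : ℕ → Bool) (m k : ℕ) :
    ClauseSat a (negClause m k) ↔ ∃ i < 2 * m, a (blockVar m k i) = false := by
  simp [ClauseSat, negClause]

lemma mem_F₀ {m : ℕ} {c : Finset (ℕ × Bool)} :
    c ∈ F₀ m ↔ (∃ i₀ < 2 * m, ∃ i₁ < 2 * m, ∃ i₂ < 2 * m, c = posClause m i₀ i₁ i₂) ∨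
      ∃ k < 3, c = negClause m k := by
  have hneg : (∃ k < 3, c = negClause m k) ↔
      c = negClause m 0 ∨ c = negClause m 1 ∨ c = negClause m 2 := by
    constructor
    · rintro ⟨k, hk, rfl⟩
      interval_cases k <;> simp
    · rintro (h | h | h) <;> exact ⟨_, by norm_num, h⟩
  rw [hneg]
  simp only [F₀, posClause, negClause, blockVar, Finset.mem_union, Finset.mem_image,
    Finset.mem_product, Finset.mem_range, Finset.mem_insert, Finset.mem_singleton, Prod.exists]
  aesop

lemma satisfiable_erase_of_clauseSat {V : Type} [DecidableEq V]
    {F : Finset (Finset (V × Bool))} {c : Finset (V × Bool)} (a : V → Bool)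
    (h : ∀ c' ∈ F, c' ≠ c → ClauseSat a c') :
    Satisfiable (F.erase c) :=
  ⟨a, fun c' hc' => h c' (Finset.mem_of_mem_erase hc') (Finset.ne_of_mem_erase hc')⟩

theorem F₀_not_satisfiable (m : ℕ) : ¬ Satisfiable (F₀ m) := by
  rintro ⟨a, ha⟩
  have hneg (k : ℕ) (hk : k < 3) : ∃ i < 2 * m, a (blockVar m k i) = false :=
    (clauseSat_negClause a m k).1 (ha _ (mem_F₀.2 (Or.inr ⟨k, hk, rfl⟩)))
  obtain ⟨i₀, h₀, a₀⟩ := hneg 0 (by norm_num)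
  obtain ⟨i₁, h₁, a₁⟩ := hneg 1 (by norm_num)
  obtain ⟨i₂, h₂, a₂⟩ := hneg 2 (by norm_num)
  have hpos := (clauseSat_posClause a m i₀ i₁ i₂).1
    (ha _ (mem_F₀.2 (Or.inl ⟨i₀, h₀, i₁, h₁, i₂, h₂, rfl⟩)))
  simp [a₀, a₁, a₂] at hpos

theorem satisfiable_F₀_erase_posClause {m i₀ i₁ i₂ : ℕ} (h₀ : i₀ < 2 * m) (h₁ : i₁ < 2 * m)
    (h₂ : i₂ < 2 * m) : Satisfiable ((F₀ m).erase (posClause m i₀ i₁ i₂)) := by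
  refine satisfiable_erase_of_clauseSat
    (fun v => decide (v ≠ blockVar m 0 i₀ ∧ v ≠ blockVar m 1 i₁ ∧ v ≠ blockVar m 2 i₂))
    fun c hc hne => ?_
  rcases mem_F₀.1 hc with ⟨j₀, g₀, j₁, g₁, j₂, g₂, rfl⟩ | ⟨k, hk, rfl⟩
  · have hdiff : j₀ ≠ i₀ ∨ j₁ ≠ i₁ ∨ j₂ ≠ i₂ := by
      by_contra! h
      obtain ⟨rfl, rfl, rfl⟩ := h
      exact hne rfl
    simp only [clauseSat_posClause, decide_eq_true_eq]
    unfold blockVar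
    omega
  · rw [clauseSat_negClause]
    interval_cases k
    exacts [⟨i₀, h₀, by simp⟩, ⟨i₁, h₁, by simp⟩, ⟨i₂, h₂, by simp⟩]

theorem satisfiable_F₀_erase_negClause {m k : ℕ} (hm : 1 ≤ m) (hk : k < 3) :
    Satisfiable ((F₀ m).erase (negClause m k)) := by
  refine satisfiable_erase_of_clauseSat (fun v => decide (v / (2 * m) = k)) fun c hc hne => ?_
  rcases mem_F₀.1 hc with ⟨i₀, h₀, i₁, h₁, i₂, h₂, rfl⟩ | ⟨j, -, rfl⟩
  · rw [clauseSat_posClause]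
    interval_cases k <;> simp [blockVar_div, h₀, h₁, h₂]
  · have hjk : j ≠ k := by
      rintro rfl
      exact hne rfl
    refine (clauseSat_negClause _ m j).2 ⟨0, by omega, ?_⟩
    simp [blockVar_div (by omega : 0 < 2 * m), hjk]

theorem F₀_minimalUnsat (m : ℕ) (hm : 1 ≤ m) : MinimalUnsat (F₀ m) := by
  refine ⟨F₀_not_satisfiable m, fun c hc => ?_⟩
  rcases mem_F₀.1 hc with ⟨i₀, h₀, i₁, h₁, i₂, h₂, rfl⟩ | ⟨k, hk, rfl⟩
  · exact satisfiable_F₀_erase_posClause h₀ h₁ h₂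
  · exact satisfiable_F₀_erase_negClause hm hk
end
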